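/- Let n, k be positive integers with n ≥ 8k and let i ∈ {1,...,n} be such that k·(i/n)·((n−i)/n) < 1 and i = n/2. If H ~ Hyp(n,i,k), then P(H ≥ i·k/n) ≥ k/n. -/

import Mathlib

/-- The probability mass function of the hypergeometric distribution `Hyp(n,i,k)`. -/
noncomputable def hypPMF (n i k j : ℕ) : ℝ :=
  ((Nat.choose i j : ℝ) * (Nat.choose (n - i) (k - j) : ℝ)) / (Nat.choose n k : ℝ)

/-- `P(H ≥ t)` for `H ~ Hyp(n,i,k)`. -/
noncomputable def hypTail (n i k : ℕ) (t : ℝ) : ℝ :=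
  ∑ j ∈ Finset.range (k + 1), if t ≤ (j : ℝ) then hypPMF n i k j else 0

/-!
For `n = 2i` the distribution `Hyp(n,i,k)` is symmetric about its mean `k/2`: the
weights of `j` and `k - j` agree. Hence the upper and lower tails at `k/2` have equal
mass, and since together they cover the whole distribution, `P(H ≥ k/2) ≥ 1/2`.
Finally `n ≥ 8k` gives `k/n ≤ 1/8 ≤ 1/2`.
-/

open Finset

lemma hypPMF_nonneg (n i k j : ℕ) : 0 ≤ hypPMF n i k j := by
  unfold hypPMF; positivity

lemma sum_hypPMF (n i k : ℕ) (hi : i ≤ n) (hk : k ≤ n) :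
    ∑ j ∈ range (k + 1), hypPMF n i k j = 1 := by
  have hvdm : (n.choose k : ℝ)
      = ∑ j ∈ range (k + 1), (i.choose j : ℝ) * ((n - i).choose (k - j)) := by
    rw [← Nat.sum_antidiagonal_eq_sum_range_succ
        (fun a b => (i.choose a : ℝ) * ((n - i).choose b)),
      ← Nat.add_sub_of_le hi, Nat.add_sub_cancel_left, Nat.add_choose_eq]
    push_cast; rfl
  have hpos : (0 : ℝ) < n.choose k := by exact_mod_cast Nat.choose_pos hk
  simp only [hypPMF, ← sum_div, ← hvdm, div_self hpos.ne']

lemma hypPMF_sub_eq_of_two_mul_eq (n i k j : ℕ) (hhalf : 2 * i = n) (hj : j ≤ k) :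
    hypPMF n i k (k - j) = hypPMF n i k j := by
  rw [hypPMF, hypPMF, show n - i = i by omega, Nat.sub_sub_self hj, mul_comm]

lemma sum_le_two_mul_sum_upper_of_symm (p : ℕ → ℝ) (k : ℕ) (hp : ∀ j, 0 ≤ p j)
    (hsymm : ∀ j ≤ k, p (k - j) = p j) :
    ∑ j ∈ range (k + 1), p j
      ≤ 2 * ∑ j ∈ range (k + 1), if (k : ℝ) / 2 ≤ j then p j else 0 := by
  have hreflect : ∑ j ∈ range (k + 1), (if (k : ℝ) / 2 ≤ j then p j else 0)
      = ∑ j ∈ range (k + 1), if (j : ℝ) ≤ k / 2 then p j else 0 := by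
    rw [← sum_range_reflect]
    refine sum_congr rfl fun j hj => ?_
    have hj : j ≤ k := Nat.lt_succ_iff.mp (mem_range.mp hj)
    rw [Nat.add_sub_cancel, hsymm j hj, Nat.cast_sub hj]
    congr 1
    exact propext ⟨fun h => by linarith, fun h => by linarith⟩
  rw [two_mul]
  nth_rewrite 2 [hreflect]
  rw [← sum_add_distrib]
  refine sum_le_sum fun j _ => ?_
  split_ifs <;> linarith [hp j]

lemma one_half_le_hypTail_of_two_mul_eq (n i k : ℕ) (hhalf : 2 * i = n) (hk : k ≤ n) :
    1 / 2 ≤ hypTail n i k ((k : ℝ) / 2) := by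
  have htotal := sum_hypPMF n i k (by omega) hk
  have := sum_le_two_mul_sum_upper_of_symm (hypPMF n i k) k (hypPMF_nonneg n i k)
    (fun j hj => hypPMF_sub_eq_of_two_mul_eq n i k j hhalf hj)
  rw [hypTail]
  linarith

theorem hyp_tail_ge_of_var_small_i_eq_general (n k i : ℕ) (hn : 0 < n)
    (h8 : 8 * k ≤ n)
    (hhalf : 2 * i = n) :
    (k : ℝ) / n ≤ hypTail n i k ((i * k : ℝ) / n) := by
  have hnR : (0 : ℝ) < n := by exact_mod_cast hn
  have hn_eq : (n : ℝ) = 2 * i := by exact_mod_cast hhalf.symm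
  have hthreshold : (i * k : ℝ) / n = k / 2 := by
    rw [div_eq_div_iff hnR.ne' two_ne_zero, hn_eq]; ring
  have hratio : (k : ℝ) / n ≤ 1 / 2 := by
    rw [div_le_div_iff₀ hnR two_pos]
    have : (8 * k : ℝ) ≤ n := by exact_mod_cast h8
    linarith [(Nat.cast_nonneg k : (0 : ℝ) ≤ k)]
  rw [hthreshold]
  exact hratio.trans (one_half_le_hypTail_of_two_mul_eq n i k hhalf (by omega))

/-- If `n ≥ 8k`, `i ∈ {1,…,n}`, `k·(i/n)·((n−i)/n) < 1` and `i = n/2`, then for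
`H ~ Hyp(n,i,k)` one has `P(H ≥ i·k/n) ≥ k/n`. -/
theorem hyp_tail_ge_of_var_small_i_eq (n k i : ℕ) (hn : 0 < n) (hk : 0 < k)
    (h8 : 8 * k ≤ n) (hi1 : 1 ≤ i) (hi2 : i ≤ n)
    (hvar : (k : ℝ) * ((i : ℝ) / n) * (((n : ℝ) - i) / n) < 1)
    (hhalf : 2 * i = n) :
    (k : ℝ) / n ≤ hypTail n i k ((i * k : ℝ) / n) :=
  hyp_tail_ge_of_var_small_i_eq_general n k i hn h8 hhalf
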